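/- Let A = U − V be a convergent K-regular splitting of A ∈ ℝ^{n×n} and let U = F − G be a convergent K-weak regular splitting of type II such that V F⁻¹ G = G F⁻¹ V. Then for every sequence s : ℕ → ℕ with s(k) ≥ 1 for all k, every b ∈ ℝ^n and every initial vector x₀ ∈ ℝ^n, the non-stationary two-stage iteration x_{k+1} = T_{s(k)} x_k + Q_{s(k)} b converges to A⁻¹ b as k → ∞. -/

import Mathlib

open Matrix Finset Filter

/-- A proper cone in `ℝ^n`: a closed, pointed, solid convex cone. -/
def IsProperCone {n : ℕ} (K : Set (Fin n → ℝ)) : Prop :=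
  IsClosed K ∧ Convex ℝ K ∧ (∀ c : ℝ, 0 ≤ c → ∀ x ∈ K, c • x ∈ K) ∧
    K ∩ (-K) = {0} ∧ (interior K).Nonempty

/-- `M ≥_K 0`: the matrix `M` leaves the cone `K` invariant. -/
def KNonneg {n : ℕ} (K : Set (Fin n → ℝ)) (M : Matrix (Fin n) (Fin n) ℝ) : Prop :=
  ∀ x ∈ K, M.mulVec x ∈ K

/-- Spectral radius: the supremum of the moduli of the complex eigenvalues. -/
noncomputable def specRad {n : ℕ} (M : Matrix (Fin n) (Fin n) ℝ) : ℝ :=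
  sSup ((fun z : ℂ => ‖z‖) '' spectrum ℂ (M.map Complex.ofReal))

/-- `A = U - V` is a `K`-regular splitting. -/
def KRegularSplitting {n : ℕ} (K : Set (Fin n → ℝ))
    (A U V : Matrix (Fin n) (Fin n) ℝ) : Prop :=
  A = U - V ∧ IsUnit U ∧ KNonneg K U⁻¹ ∧ KNonneg K V

/-- `A = U - V` is a `K`-weak regular splitting of type I. -/
def KWeakRegularSplittingI {n : ℕ} (K : Set (Fin n → ℝ))
    (A U V : Matrix (Fin n) (Fin n) ℝ) : Prop :=
  A = U - V ∧ IsUnit U ∧ KNonneg K U⁻¹ ∧ KNonneg K (U⁻¹ * V)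

/-- `A = U - V` is a `K`-weak regular splitting of type II. -/
def KWeakRegularSplittingII {n : ℕ} (K : Set (Fin n → ℝ))
    (A U V : Matrix (Fin n) (Fin n) ℝ) : Prop :=
  A = U - V ∧ IsUnit U ∧ KNonneg K U⁻¹ ∧ KNonneg K (V * U⁻¹)

/-- `A` is `K`-monotone: invertible with `A⁻¹ ≥_K 0`. -/
def KMonotone {n : ℕ} (K : Set (Fin n → ℝ)) (A : Matrix (Fin n) (Fin n) ℝ) : Prop :=
  IsUnit A ∧ KNonneg K A⁻¹

/-- Two-stage iteration matrix `T_s = (F⁻¹G)^s + Σ_{j=0}^{s-1} (F⁻¹G)^j F⁻¹ V`. -/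
noncomputable def twoStageT {n : ℕ} (F G V : Matrix (Fin n) (Fin n) ℝ) (s : ℕ) :
    Matrix (Fin n) (Fin n) ℝ :=
  (F⁻¹ * G) ^ s + (∑ j ∈ Finset.range s, (F⁻¹ * G) ^ j) * (F⁻¹ * V)

/-- `T̂_s = (GF⁻¹)^s + Σ_{j=0}^{s-1} (GF⁻¹)^j V F⁻¹`. -/
noncomputable def twoStageThat {n : ℕ} (F G V : Matrix (Fin n) (Fin n) ℝ) (s : ℕ) :
    Matrix (Fin n) (Fin n) ℝ :=
  (G * F⁻¹) ^ s + (∑ j ∈ Finset.range s, (G * F⁻¹) ^ j) * (V * F⁻¹)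

/-- `Q_s = Σ_{j=0}^{s-1} (F⁻¹G)^j F⁻¹`. -/
noncomputable def twoStageQ {n : ℕ} (F G : Matrix (Fin n) (Fin n) ℝ) (s : ℕ) :
    Matrix (Fin n) (Fin n) ℝ :=
  (∑ j ∈ Finset.range s, (F⁻¹ * G) ^ j) * F⁻¹

/-!
The scaled errors `εₖ = F (xₖ - A⁻¹ b)` satisfy `εₖ₊₁ = T̂_{s k} εₖ` with `T̂ₘ = F Tₘ F⁻¹ ≥_K 0`.
Neumann series for the two convergent splittings give `F A⁻¹ ≥_K I`, so `w = F A⁻¹ e` is interior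
to `K` for any interior point `e`, and the identity `(I - T̂ₘ) F A⁻¹ = ∑_{j<m} (G F⁻¹)^j` gives
`w - T̂ₘ w ≥_K e ≥_K δ w` for all `m ≥ 1`. Hence every `T̂ₘ` maps the order interval `[-c w, c w]`
into `[-(1-δ) c w, (1-δ) c w]`, and since `K` is closed and pointed these intervals have norm
bounded by a multiple of `c`.
-/

open scoped Topology

theorem tendsto_pow_of_spectralRadius_lt_one {A : Type*} [NormedRing A] [NormedAlgebra ℂ A]
    [CompleteSpace A] {a : A} (h : spectralRadius ℂ a < 1) :
    Tendsto (fun k => a ^ k) atTop (𝓝 0) := by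
  obtain ⟨r, hρr, hr1⟩ := ENNReal.lt_iff_exists_nnreal_btwn.1 h
  have hle : ∀ᶠ k in atTop, ‖a ^ k‖ ≤ (r : ℝ) ^ k := by
    filter_upwards [(spectrum.pow_nnnorm_pow_one_div_tendsto_nhds_spectralRadius a).eventually_lt_const
      hρr, eventually_gt_atTop 0] with k hk hk0
    rw [one_div, ENNReal.rpow_inv_lt_iff (by positivity), ENNReal.rpow_natCast,
      ← ENNReal.coe_pow, ENNReal.coe_lt_coe] at hk
    exact_mod_cast hk.le
  exact squeeze_zero_norm' hle (tendsto_pow_atTop_nhds_zero_of_lt_one r.2 (by exact_mod_cast hr1))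

section

attribute [local instance] Matrix.linftyOpNormedAddCommGroup Matrix.linftyOpNormedRing
  Matrix.linftyOpNormedAlgebra

theorem tendsto_pow_of_specRad_lt_one {n : ℕ} {M : Matrix (Fin n) (Fin n) ℝ}
    (h : specRad M < 1) : Tendsto (fun k => M ^ k) atTop (𝓝 0) := by
  set a := M.map Complex.ofReal with ha
  have hρ : spectralRadius ℂ a < 1 := by
    refine lt_of_le_of_lt (iSup₂_le fun z hz => ?_) (ENNReal.ofReal_lt_one.2 h)
    rw [← ENNReal.ofReal_coe_nnreal, coe_nnnorm]
    exact ENNReal.ofReal_le_ofReal <|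
      le_csSup ((spectrum.isCompact a).image continuous_norm).bddAbove ⟨z, hz, rfl⟩
  have hre : ∀ k, M ^ k = (a ^ k).map Complex.re := fun k => by
    rw [ha, show M.map Complex.ofReal = Complex.ofRealHom.mapMatrix M from rfl, ← map_pow]
    ext i j
    simp
  simpa [hre, Function.comp_def] using
    ((continuous_id.matrix_map Complex.continuous_re).tendsto 0).comp
      (tendsto_pow_of_spectralRadius_lt_one hρ)

end

theorem Filter.Tendsto.mulVec_const {ι m n R : Type*} [Fintype n] [NonUnitalNonAssocSemiring R]
    [TopologicalSpace R] [IsTopologicalSemiring R] {l : Filter ι} {f : ι → Matrix m n R}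
    {M : Matrix m n R} (h : Tendsto f l (𝓝 M)) (v : n → R) :
    Tendsto (fun i => f i *ᵥ v) l (𝓝 (M *ᵥ v)) :=
  ((continuous_id.matrix_mulVec continuous_const).tendsto M).comp h

theorem tendsto_pow_mul_comm {R : Type*} [MonoidWithZero R] [TopologicalSpace R] [ContinuousMul R]
    {x y : R} (h : Tendsto (fun k => (x * y) ^ k) atTop (𝓝 0)) :
    Tendsto (fun k => (y * x) ^ k) atTop (𝓝 0) := by
  have hsucc : ∀ k, (y * x) ^ (k + 1) = y * (x * y) ^ k * x := fun k => by
    rw [mul_assoc, mul_pow_mul, ← mul_assoc, pow_succ']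
  refine (tendsto_add_atTop_iff_nat 1).1 ?_
  simpa [hsucc] using (h.const_mul y).mul_const x

theorem isUnit_one_sub_of_tendsto_pow {m 𝕜 : Type*} [Fintype m] [DecidableEq m] [Field 𝕜]
    [TopologicalSpace 𝕜] [IsTopologicalRing 𝕜] [T2Space 𝕜] {M : Matrix m m 𝕜}
    (h : Tendsto (fun k => M ^ k) atTop (𝓝 0)) : IsUnit (1 - M) := by
  refine mulVec_injective_iff_isUnit.1 fun u v huv => ?_
  have hfix : M *ᵥ (u - v) = u - v := by
    simp only [sub_mulVec, one_mulVec] at huv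
    rw [mulVec_sub]
    linear_combination -huv
  have hpow : ∀ k, (M ^ k) *ᵥ (u - v) = u - v := fun k => by
    induction k with
    | zero => simp
    | succ k ih => rw [pow_succ, ← mulVec_mulVec, hfix, ih]
  have hlim := h.mulVec_const (u - v)
  simp only [hpow, zero_mulVec] at hlim
  exact sub_eq_zero.1 (tendsto_const_nhds_iff.1 hlim)

namespace IsProperCone

variable {n : ℕ} {K : Set (Fin n → ℝ)}

theorem zero_mem (hK : IsProperCone K) : (0 : Fin n → ℝ) ∈ K :=
  (hK.2.2.2.1.symm ▸ Set.mem_singleton 0 : (0 : Fin n → ℝ) ∈ K ∩ -K).1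

theorem smul_mem (hK : IsProperCone K) {c : ℝ} (hc : 0 ≤ c) {x : Fin n → ℝ} (hx : x ∈ K) :
    c • x ∈ K :=
  hK.2.2.1 c hc x hx

theorem add_mem (hK : IsProperCone K) {x y : Fin n → ℝ} (hx : x ∈ K) (hy : y ∈ K) :
    x + y ∈ K := by
  have hmid := hK.2.1 hx hy (by norm_num : (0 : ℝ) ≤ 1 / 2) (by norm_num : (0 : ℝ) ≤ 1 / 2)
    (by norm_num)
  have h2 : (2 : ℝ) • ((1 / 2 : ℝ) • x + (1 / 2 : ℝ) • y) = x + y := by module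
  exact h2 ▸ hK.smul_mem zero_le_two hmid

theorem add_mem_interior (hK : IsProperCone K) {x y : Fin n → ℝ} (hx : x ∈ interior K)
    (hy : y ∈ K) : x + y ∈ interior K :=
  interior_maximal (by rintro _ ⟨z, hz, rfl⟩; exact hK.add_mem (interior_subset hz) hy)
    ((isOpenMap_add_right y) _ isOpen_interior) ⟨x, hx, rfl⟩

theorem eventually_add_smul_mem {x : Fin n → ℝ} (hx : x ∈ interior K) (v : Fin n → ℝ) :
    ∀ᶠ σ in 𝓝 (0 : ℝ), x + σ • v ∈ K := by
  have hcont : ContinuousAt (fun σ : ℝ => x + σ • v) 0 := by fun_prop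
  exact hcont.preimage_mem_nhds (by simpa using mem_interior_iff_mem_nhds.1 hx)

theorem exists_pos_smul_sub_mem_and_add_mem (hK : IsProperCone K) {w : Fin n → ℝ}
    (hw : w ∈ interior K) (v : Fin n → ℝ) :
    ∃ t : ℝ, 0 < t ∧ t • w - v ∈ K ∧ t • w + v ∈ K := by
  obtain ⟨σ, ⟨hσ₁, hσ₂⟩, hσ⟩ := (((eventually_add_smul_mem hw (-v)).and
    (eventually_add_smul_mem hw v)).filter_mono nhdsWithin_le_nhds |>.and
      (self_mem_nhdsWithin : Set.Ioi (0 : ℝ) ∈ 𝓝[>] 0)).exists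
  refine ⟨σ⁻¹, inv_pos.2 hσ, ?_, ?_⟩
  · convert hK.smul_mem (inv_pos.2 hσ).le hσ₁ using 1
    rw [smul_add, smul_smul, inv_mul_cancel₀ hσ.ne', one_smul, sub_eq_add_neg]
  · convert hK.smul_mem (inv_pos.2 hσ).le hσ₂ using 1
    rw [smul_add, smul_smul, inv_mul_cancel₀ hσ.ne', one_smul]

theorem exists_norm_le_of_sub_mem_of_add_mem (hK : IsProperCone K) (w : Fin n → ℝ) :
    ∃ B, ∀ y, w - y ∈ K → w + y ∈ K → ‖y‖ ≤ B := by
  by_contra! h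
  choose y hy₁ hy₂ hy using fun m : ℕ => h m
  have hpos : ∀ m, 0 < ‖y m‖ := fun m => (Nat.cast_nonneg m).trans_lt (hy m)
  have hsphere : ∀ m, ‖y m‖⁻¹ • y m ∈ Metric.sphere (0 : Fin n → ℝ) 1 := fun m => by
    simp [norm_smul, inv_mul_cancel₀ (hpos m).ne']
  obtain ⟨d, hd, φ, hφ, hlim⟩ := (isCompact_sphere (0 : Fin n → ℝ) 1).tendsto_subseq hsphere
  have hinv : Tendsto (fun m => ‖y (φ m)‖⁻¹) atTop (𝓝 0) :=
    (tendsto_atTop_mono (fun m => (Nat.cast_le.2 (hφ.id_le m)).trans (hy (φ m)).le)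
      tendsto_natCast_atTop_atTop).inv_tendsto_atTop
  have hadd : Tendsto (fun m => ‖y (φ m)‖⁻¹ • (w + y (φ m))) atTop (𝓝 d) := by
    simpa [smul_add] using (hinv.smul_const w).add hlim
  have hsub : Tendsto (fun m => ‖y (φ m)‖⁻¹ • (w - y (φ m))) atTop (𝓝 (-d)) := by
    simpa [smul_sub] using (hinv.smul_const w).sub hlim
  have hdK : d ∈ K ∩ -K :=
    ⟨hK.1.mem_of_tendsto hadd (Eventually.of_forall fun m => hK.smul_mem (by positivity) (hy₂ _)),
      hK.1.mem_of_tendsto hsub (Eventually.of_forall fun m => hK.smul_mem (by positivity) (hy₁ _))⟩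
  rw [hK.2.2.2.1, Set.mem_singleton_iff] at hdK
  simp [hdK] at hd

end IsProperCone

namespace KNonneg

variable {n : ℕ} {K : Set (Fin n → ℝ)} {M N : Matrix (Fin n) (Fin n) ℝ}

theorem one : KNonneg K 1 := fun x hx => by rwa [one_mulVec]

theorem mul (hM : KNonneg K M) (hN : KNonneg K N) : KNonneg K (M * N) :=
  fun x hx => mulVec_mulVec x M N ▸ hM _ (hN x hx)

theorem pow (hM : KNonneg K M) (k : ℕ) : KNonneg K (M ^ k) := by
  induction k with
  | zero => exact one
  | succ k ih => exact pow_succ M k ▸ ih.mul hM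

theorem add (hK : IsProperCone K) (hM : KNonneg K M) (hN : KNonneg K N) : KNonneg K (M + N) :=
  fun x hx => by rw [add_mulVec]; exact hK.add_mem (hM x hx) (hN x hx)

theorem sum (hK : IsProperCone K) {ι : Type*} (s : Finset ι) {f : ι → Matrix (Fin n) (Fin n) ℝ}
    (hf : ∀ i ∈ s, KNonneg K (f i)) : KNonneg K (∑ i ∈ s, f i) :=
  Finset.sum_induction f (KNonneg K) (fun _ _ => add hK)
    (fun x _ => by rw [zero_mulVec]; exact hK.zero_mem) hf

end KNonneg

theorem kNonneg_of_one_sub_mul_eq_one {n : ℕ} {K : Set (Fin n → ℝ)} (hK : IsProperCone K)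
    {X P : Matrix (Fin n) (Fin n) ℝ} (hX : KNonneg K X)
    (hpow : Tendsto (fun k => X ^ k) atTop (𝓝 0)) (hP : (1 - X) * P = 1) : KNonneg K P := by
  have hpartial : ∀ k, ∑ j ∈ range k, X ^ j = (1 - X ^ k) * P := fun k => by
    rw [← geom_sum_mul_neg, mul_assoc, hP, mul_one]
  have hlim : Tendsto (fun k => ∑ j ∈ range k, X ^ j) atTop (𝓝 P) := by
    simpa [hpartial] using (hpow.const_sub 1).mul_const P
  intro z hz
  exact hK.1.mem_of_tendsto (hlim.mulVec_const z)
    (Eventually.of_forall fun k => KNonneg.sum hK _ (fun j _ => hX.pow j) z hz)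

section Contraction

variable {n : ℕ} {K : Set (Fin n → ℝ)}

theorem smul_sub_mulVec_mem (hK : IsProperCone K) {T : Matrix (Fin n) (Fin n) ℝ}
    (hT : KNonneg K T) {w y : Fin n → ℝ} {c θ : ℝ} (hc : 0 ≤ c) (hy : c • w - y ∈ K)
    (hTw : θ • w - T *ᵥ w ∈ K) : (c * θ) • w - T *ᵥ y ∈ K := by
  have h := hK.add_mem (hT _ hy) (hK.smul_mem hc hTw)
  rwa [mulVec_sub, mulVec_smul, smul_sub, smul_smul, sub_add_sub_cancel'] at h

theorem tendsto_zero_of_smul_sub_mulVec_mem (hK : IsProperCone K) {w : Fin n → ℝ}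
    (hw : w ∈ interior K) {θ : ℝ} (hθ0 : 0 < θ) (hθ1 : θ < 1)
    {T : ℕ → Matrix (Fin n) (Fin n) ℝ} (hT : ∀ k, KNonneg K (T k))
    (hTw : ∀ k, θ • w - T k *ᵥ w ∈ K) {e : ℕ → Fin n → ℝ} (he : ∀ k, e (k + 1) = T k *ᵥ e k) :
    Tendsto e atTop (𝓝 0) := by
  obtain ⟨t, ht, ht₁, ht₂⟩ := hK.exists_pos_smul_sub_mem_and_add_mem hw (e 0)
  have hdom : ∀ k, (t * θ ^ k) • w - e k ∈ K ∧ (t * θ ^ k) • w - -e k ∈ K := by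
    intro k
    induction k with
    | zero => simpa using ⟨ht₁, ht₂⟩
    | succ k ih =>
      have hc : 0 ≤ t * θ ^ k := by positivity
      rw [he, ← mulVec_neg, pow_succ, ← mul_assoc]
      exact ⟨smul_sub_mulVec_mem hK (hT k) hc ih.1 (hTw k),
        smul_sub_mulVec_mem hK (hT k) hc ih.2 (hTw k)⟩
  obtain ⟨B, hB⟩ := hK.exists_norm_le_of_sub_mem_of_add_mem w
  have hbound : ∀ k, ‖e k‖ ≤ t * B * θ ^ k := by
    intro k
    set c := t * θ ^ k
    have hc : 0 < c := by positivity
    have hscale : ∀ y, c⁻¹ • (c • w - y) = w - c⁻¹ • y := fun y => by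
      rw [smul_sub, smul_smul, inv_mul_cancel₀ hc.ne', one_smul]
    have h := hB (c⁻¹ • e k) (hscale (e k) ▸ hK.smul_mem (inv_nonneg.2 hc.le) (hdom k).1)
      (by rw [← sub_neg_eq_add, ← smul_neg, ← hscale]
          exact hK.smul_mem (inv_nonneg.2 hc.le) (hdom k).2)
    rw [norm_smul, Real.norm_of_nonneg (inv_nonneg.2 hc.le), inv_mul_le_iff₀ hc] at h
    linarith
  refine squeeze_zero_norm hbound ?_
  simpa using (tendsto_pow_atTop_nhds_zero_of_lt_one hθ0.le hθ1).const_mul (t * B)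

end Contraction

section Splitting

variable {n : ℕ} {K : Set (Fin n → ℝ)} {A U V F G : Matrix (Fin n) (Fin n) ℝ}

theorem isUnit_of_tendsto_pow (hA : A = U - V) (hU : IsUnit U)
    (hconv : Tendsto (fun k => (U⁻¹ * V) ^ k) atTop (𝓝 0)) : IsUnit A := by
  have hfactor : A = U * (1 - U⁻¹ * V) := by
    rw [mul_sub, mul_one, ← mul_assoc, mul_nonsing_inv U ((isUnit_iff_isUnit_det U).1 hU), one_mul,
      hA]
  exact hfactor ▸ hU.mul (isUnit_one_sub_of_tendsto_pow hconv)

theorem kNonneg_mul_inv_of_tendsto_pow (hK : IsProperCone K) (hA : A = U - V) (hU : IsUnit U)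
    (hVU : KNonneg K (V * U⁻¹)) (hconv : Tendsto (fun k => (U⁻¹ * V) ^ k) atTop (𝓝 0)) :
    KNonneg K (U * A⁻¹) := by
  have hA' := (isUnit_iff_isUnit_det A).1 (isUnit_of_tendsto_pow hA hU hconv)
  refine kNonneg_of_one_sub_mul_eq_one hK hVU (tendsto_pow_mul_comm hconv) ?_
  rw [sub_mul, one_mul, mul_assoc, ← mul_assoc U⁻¹,
    nonsing_inv_mul U ((isUnit_iff_isUnit_det U).1 hU), one_mul, ← sub_mul, ← hA,
    mul_nonsing_inv A hA']

theorem kNonneg_mul_inv_sub_one (hK : IsProperCone K) (houter : KRegularSplitting K A U V)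
    (hinner : KWeakRegularSplittingII K U F G)
    (houterconv : Tendsto (fun k => (U⁻¹ * V) ^ k) atTop (𝓝 0))
    (hinnerconv : Tendsto (fun k => (F⁻¹ * G) ^ k) atTop (𝓝 0)) : KNonneg K (F * A⁻¹ - 1) := by
  obtain ⟨hA, hU, -, hV⟩ := houter
  obtain ⟨hUFG, hF, hFinv, hGF⟩ := hinner
  have hA' := (isUnit_iff_isUnit_det A).1 (isUnit_of_tendsto_pow hA hU houterconv)
  have hU' := (isUnit_iff_isUnit_det U).1 hU
  have hF' := (isUnit_iff_isUnit_det F).1 hF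
  have hVF : KNonneg K (V * F⁻¹) := hV.mul hFinv
  have hFU : KNonneg K (F * U⁻¹) := kNonneg_mul_inv_of_tendsto_pow hK hUFG hF hGF hinnerconv
  have hUA : KNonneg K (U * A⁻¹) := by
    refine kNonneg_mul_inv_of_tendsto_pow hK hA hU ?_ houterconv
    rw [show V * U⁻¹ = V * F⁻¹ * (F * U⁻¹) by
      rw [mul_assoc, ← mul_assoc F⁻¹, nonsing_inv_mul F hF', one_mul]]
    exact hVF.mul hFU
  have hfactor : F * A⁻¹ - 1 = (G * F⁻¹ + V * F⁻¹) * (F * U⁻¹ * (U * A⁻¹)) := by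
    rw [← add_mul, mul_assoc F, ← mul_assoc U⁻¹, nonsing_inv_mul U hU', one_mul, mul_assoc,
      ← mul_assoc F⁻¹, nonsing_inv_mul F hF', one_mul, ← mul_nonsing_inv A hA', ← sub_mul]
    congr 1
    rw [hA, hUFG]
    abel
  rw [hfactor]
  exact (hGF.add hK hVF).mul (hFU.mul hUA)

end Splitting

section TwoStage

variable {n : ℕ} {K : Set (Fin n → ℝ)} {A U V F G : Matrix (Fin n) (Fin n) ℝ}

theorem twoStageT_add_twoStageQ_mul (hA : A = U - V) (hU : U = F - G) (hF : IsUnit F) (m : ℕ) :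
    twoStageT F G V m + twoStageQ F G m * A = 1 := by
  have hFU : F⁻¹ * U = 1 - F⁻¹ * G := by
    rw [hU, mul_sub, nonsing_inv_mul F ((isUnit_iff_isUnit_det F).1 hF)]
  calc twoStageT F G V m + twoStageQ F G m * A
      = (F⁻¹ * G) ^ m + (∑ j ∈ range m, (F⁻¹ * G) ^ j) * (F⁻¹ * U) := by
        rw [twoStageT, twoStageQ, hA]; noncomm_ring
    _ = 1 := by rw [hFU, geom_sum_mul_neg, add_sub_cancel]

theorem mul_twoStageT (hF : IsUnit F) (m : ℕ) :
    F * twoStageT F G V m = twoStageThat F G V m * F := by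
  have hF' := (isUnit_iff_isUnit_det F).1 hF
  have hconj : SemiconjBy F (F⁻¹ * G) (G * F⁻¹) := by
    rw [SemiconjBy, ← mul_assoc, mul_assoc G, mul_nonsing_inv F hF', nonsing_inv_mul F hF',
      one_mul, mul_one]
  have hsum : F * ∑ j ∈ range m, (F⁻¹ * G) ^ j = (∑ j ∈ range m, (G * F⁻¹) ^ j) * F := by
    rw [mul_sum, sum_mul]
    exact sum_congr rfl fun j _ => hconj.pow_right j
  rw [twoStageT, twoStageThat, mul_add, add_mul, (hconj.pow_right m).eq, ← mul_assoc, hsum,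
    mul_assoc, mul_assoc, mul_assoc, ← mul_assoc F, mul_nonsing_inv F hF', one_mul,
    nonsing_inv_mul F hF', mul_one]

theorem one_sub_twoStageThat_mul (hA : A = U - V) (hU : U = F - G) (hF : IsUnit F)
    (hA' : IsUnit A) (m : ℕ) :
    (1 - twoStageThat F G V m) * (F * A⁻¹) = ∑ j ∈ range m, (G * F⁻¹) ^ j := by
  have hF' := (isUnit_iff_isUnit_det F).1 hF
  have h1 : 1 - twoStageThat F G V m = (∑ j ∈ range m, (G * F⁻¹) ^ j) * (A * F⁻¹) := by
    rw [twoStageThat, sub_add_eq_sub_sub, ← geom_sum_mul_neg, hA, hU, ← mul_nonsing_inv F hF']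
    noncomm_ring
  rw [h1, mul_assoc, mul_assoc, ← mul_assoc F⁻¹, nonsing_inv_mul F hF', one_mul,
    mul_nonsing_inv A ((isUnit_iff_isUnit_det A).1 hA'), mul_one]


theorem twoStage_error_step (hA : A = U - V) (hU : U = F - G) (hF : IsUnit F) (hA' : IsUnit A)
    {m : ℕ} {b x y : Fin n → ℝ}
    (hy : y = twoStageT F G V m *ᵥ x + twoStageQ F G m *ᵥ b) :
    F *ᵥ (y - A⁻¹ *ᵥ b) = twoStageThat F G V m *ᵥ (F *ᵥ (x - A⁻¹ *ᵥ b)) := by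
  have hfix : twoStageT F G V m *ᵥ (A⁻¹ *ᵥ b) = A⁻¹ *ᵥ b - twoStageQ F G m *ᵥ b := by
    conv_rhs => rw [← one_mulVec (A⁻¹ *ᵥ b), ← twoStageT_add_twoStageQ_mul hA hU hF m]
    rw [add_mulVec, ← mulVec_mulVec, mulVec_mulVec b A,
      mul_nonsing_inv A ((isUnit_iff_isUnit_det A).1 hA'), one_mulVec, add_sub_cancel_right]
  have herr : y - A⁻¹ *ᵥ b = twoStageT F G V m *ᵥ (x - A⁻¹ *ᵥ b) := by
    rw [hy, mulVec_sub, hfix]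
    abel
  rw [herr, mulVec_mulVec, mul_twoStageT hF, ← mulVec_mulVec]

theorem kNonneg_twoStageThat (hK : IsProperCone K) (hGF : KNonneg K (G * F⁻¹))
    (hVF : KNonneg K (V * F⁻¹)) (m : ℕ) : KNonneg K (twoStageThat F G V m) :=
  (hGF.pow m).add hK ((KNonneg.sum hK _ fun j _ => hGF.pow j).mul hVF)

theorem exists_twoStageThat_contraction (hK : IsProperCone K) (hA : A = U - V) (hU : U = F - G)
    (hF : IsUnit F) (hA' : IsUnit A) (hGF : KNonneg K (G * F⁻¹))
    (hFA : KNonneg K (F * A⁻¹ - 1)) :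
    ∃ w ∈ interior K, ∃ θ : ℝ, 0 < θ ∧ θ < 1 ∧
      ∀ m, 1 ≤ m → θ • w - twoStageThat F G V m *ᵥ w ∈ K := by
  obtain ⟨e, he⟩ := hK.2.2.2.2
  have heK := interior_subset he
  set w := (F * A⁻¹) *ᵥ e
  have hw : w ∈ interior K := by
    simpa [sub_mulVec] using hK.add_mem_interior he (hFA e heK)
  obtain ⟨t, ht, hte, -⟩ := hK.exists_pos_smul_sub_mem_and_add_mem he w
  -- `t + 1` rather than `t`, so that the contraction factor `1 - (t + 1)⁻¹` is positive
  have hte' : (t + 1) • e - w ∈ K := by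
    simpa [add_smul, add_sub_right_comm] using hK.add_mem hte heK
  refine ⟨w, hw, 1 - (t + 1)⁻¹, by simp [inv_lt_one_of_one_lt₀ (by linarith : 1 < t + 1)],
    by simp [ht.trans (lt_add_one t)], fun m hm => ?_⟩
  obtain ⟨m, rfl⟩ := Nat.exists_eq_add_of_le' hm
  have hsum : w - twoStageThat F G V (m + 1) *ᵥ w - e
      = (∑ j ∈ range m, (G * F⁻¹) ^ (j + 1)) *ᵥ e :=
    calc w - twoStageThat F G V (m + 1) *ᵥ w - e
        = ((1 - twoStageThat F G V (m + 1)) * (F * A⁻¹)) *ᵥ e - e := by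
          rw [← mulVec_mulVec, sub_mulVec, one_mulVec]
      _ = (∑ j ∈ range m, (G * F⁻¹) ^ (j + 1)) *ᵥ e := by
          rw [one_sub_twoStageThat_mul hA hU hF hA', sum_range_succ', pow_zero, add_mulVec,
            one_mulVec, add_sub_cancel_right]
  have hsplit : (1 - (t + 1)⁻¹) • w - twoStageThat F G V (m + 1) *ᵥ w
      = (w - twoStageThat F G V (m + 1) *ᵥ w - e) + (t + 1)⁻¹ • ((t + 1) • e - w) := by
    rw [smul_sub, smul_smul, inv_mul_cancel₀ (by linarith), one_smul]
    module
  rw [hsplit, hsum]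
  exact hK.add_mem (KNonneg.sum hK _ (fun j _ => hGF.pow (j + 1)) e heK)
    (hK.smul_mem (by positivity) hte')

end TwoStage

theorem stmt_8_general {n : ℕ} (K : Set (Fin n → ℝ)) (hK : IsProperCone K)
    (A U V F G : Matrix (Fin n) (Fin n) ℝ)
    (houter : KRegularSplitting K A U V) (houterconv : specRad (U⁻¹ * V) < 1)
    (hinner : KWeakRegularSplittingII K U F G) (hinnerconv : specRad (F⁻¹ * G) < 1) :
    ∀ s : ℕ → ℕ, (∀ k, 1 ≤ s k) → ∀ b x₀ : Fin n → ℝ, ∀ x : ℕ → Fin n → ℝ,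
      x 0 = x₀ →
      (∀ k, x (k + 1) =
        (twoStageT F G V (s k)).mulVec (x k) + (twoStageQ F G (s k)).mulVec b) →
      Filter.Tendsto x Filter.atTop (nhds (A⁻¹.mulVec b)) := by
  intro s hs b x₀ x _ hx
  have hUV := tendsto_pow_of_specRad_lt_one houterconv
  have hFG := tendsto_pow_of_specRad_lt_one hinnerconv
  have hFA := kNonneg_mul_inv_sub_one hK houter hinner hUV hFG
  obtain ⟨hA, hU, -, hV⟩ := houter
  obtain ⟨hUFG, hF, hFinv, hGF⟩ := hinner
  have hA' := isUnit_of_tendsto_pow hA hU hUV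
  obtain ⟨w, hw, θ, hθ0, hθ1, hθ⟩ := exists_twoStageThat_contraction hK hA hUFG hF hA' hGF hFA
  have herr : Tendsto (fun k => F *ᵥ (x k - A⁻¹ *ᵥ b)) atTop (𝓝 0) :=
    tendsto_zero_of_smul_sub_mulVec_mem hK hw hθ0 hθ1
      (fun k => kNonneg_twoStageThat hK hGF (hV.mul hFinv) (s k)) (fun k => hθ (s k) (hs k))
      (fun k => twoStage_error_step hA hUFG hF hA' (hx k))
  have hlim : Tendsto (fun k => F⁻¹ *ᵥ (F *ᵥ (x k - A⁻¹ *ᵥ b))) atTop (𝓝 (F⁻¹ *ᵥ 0)) :=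
    ((continuous_const.matrix_mulVec continuous_id).tendsto 0).comp herr
  simp only [mulVec_mulVec, nonsing_inv_mul F ((isUnit_iff_isUnit_det F).1 hF),
    one_mulVec, mulVec_zero] at hlim
  exact tendsto_sub_nhds_zero_iff.1 hlim

theorem stmt_8 {n : ℕ} (K : Set (Fin n → ℝ)) (hK : IsProperCone K)
    (A U V F G : Matrix (Fin n) (Fin n) ℝ)
    (houter : KRegularSplitting K A U V) (houterconv : specRad (U⁻¹ * V) < 1)
    (hinner : KWeakRegularSplittingII K U F G) (hinnerconv : specRad (F⁻¹ * G) < 1)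
    (hcomm : V * F⁻¹ * G = G * F⁻¹ * V) :
    ∀ s : ℕ → ℕ, (∀ k, 1 ≤ s k) → ∀ b x₀ : Fin n → ℝ, ∀ x : ℕ → Fin n → ℝ,
      x 0 = x₀ →
      (∀ k, x (k + 1) =
        (twoStageT F G V (s k)).mulVec (x k) + (twoStageQ F G (s k)).mulVec b) →
      Filter.Tendsto x Filter.atTop (nhds (A⁻¹.mulVec b)) :=
  stmt_8_general K hK A U V F G houter houterconv hinner hinnerconv
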